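/- Let K be a field, E a directed graph, v an infinite emitter in E, and S_{v∞} the left L_K(E)-module whose underlying K-vector space has basis the set of finite paths p with r(p) = v, with the module action given by P_u, S_e, S_{e*} (where S_{e*}·v = 0 for every edge e). Then S_{v∞} is a simple left L_K(E)-module. -/

import Mathlib

open scoped Classical

variable {V E : Type*}

/-- The source of a path ending at `v`, represented as a list of edges
(the empty list is the trivial path at `v`). -/
def psrc (s : E → V) (v : V) : List E → V
  | [] => v
  | e :: _ => s e

/-- `l` is a path in the graph `(V, E, s, r)` with range `v`: consecutive edges are
composable and the last edge has range `v`. -/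
def IsPathTo (s r : E → V) (v : V) (l : List E) : Prop :=
  l.Chain' (fun e f => r e = s f) ∧ ∀ e ∈ l.getLast?, r e = v

/-- The set `B` of paths `p` with `r(p) = v` (including the trivial path `v`). -/
def PathTo (s r : E → V) (v : V) : Type _ := {l : List E // IsPathTo s r v l}

theorem IsPathTo.cons {s r : E → V} {v : V} {e : E} {l : List E}
    (hl : IsPathTo s r v l) (h : r e = psrc s v l) : IsPathTo s r v (e :: l) := by
  obtain ⟨h1, h2⟩ := hl
  refine ⟨?_, ?_⟩
  · cases l with
    | nil => exact List.isChain_singleton _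
    | cons f t => exact List.isChain_cons_cons.mpr ⟨h, h1⟩
  · cases l with
    | nil =>
      intro x hx
      simp only [List.getLast?_singleton, Option.mem_some_iff] at hx
      subst hx; exact h
    | cons f t =>
      intro x hx
      rw [List.getLast?_cons_cons] at hx
      exact h2 x hx

variable (s r : E → V) (v : V) (K : Type*) [Field K]

/-- The operator `P_u` on the vector space with basis the paths ending at `v`. -/
noncomputable def Pop (u : V) : (PathTo s r v →₀ K) →ₗ[K] (PathTo s r v →₀ K) :=
  Finsupp.lsum K fun p => if psrc s v p.1 = u then Finsupp.lsingle p else 0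

/-- The operator `S_e`: prepends the edge `e` when composable, else `0`. -/
noncomputable def Sop (e : E) : (PathTo s r v →₀ K) →ₗ[K] (PathTo s r v →₀ K) :=
  Finsupp.lsum K fun p =>
    if h : r e = psrc s v p.1 then Finsupp.lsingle (⟨e :: p.1, p.2.cons h⟩ : PathTo s r v)
    else 0

/-- The operator `S_{e*}`: removes a leading edge `e` when present, else `0`
(in particular `S_{e*}(v) = 0`). -/
noncomputable def Stop (e : E) : (PathTo s r v →₀ K) →ₗ[K] (PathTo s r v →₀ K) :=
  Finsupp.lsum K fun p =>
    if h : ∃ q : PathTo s r v, p.1 = e :: q.1 then Finsupp.lsingle h.choose else 0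

/-!
Let `x` be a nonzero element of an invariant subspace `U`, and let `p` be a path of maximal
length in the support of `x`. Stripping the edges of `p` one at a time with the ghost
operators `S_{e*}` sends `x` to `x(p) • v`: every other path in the support either does not
begin with `p` or, by maximality, equals `p`. Hence `v ∈ U`, and prepending edges with the
operators `S_e` produces every path ending at `v`, so `U` is everything.
-/

attribute [reducible] PathTo

section PathSpace

variable {s r : E → V} {v : V}

theorem isPathTo_nil : IsPathTo s r v [] := ⟨List.isChain_nil, by simp⟩

theorem IsPathTo.tail {e : E} {t : List E} (h : IsPathTo s r v (e :: t)) :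
    IsPathTo s r v t := by
  obtain ⟨hchain, hlast⟩ := h
  cases t with
  | nil => exact isPathTo_nil
  | cons f u =>
    rw [List.Chain', List.isChain_cons_cons] at hchain
    exact ⟨hchain.2, fun x hx => hlast x (by rwa [List.getLast?_cons_cons])⟩

theorem IsPathTo.range_head {e : E} {t : List E} (h : IsPathTo s r v (e :: t)) :
    r e = psrc s v t := by
  obtain ⟨hchain, hlast⟩ := h
  cases t with
  | nil => exact hlast e (by simp)
  | cons f u => rw [List.Chain', List.isChain_cons_cons] at hchain; exact hchain.1

def PathTo.nil : PathTo s r v := ⟨[], isPathTo_nil⟩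

instance : Nonempty (PathTo s r v) := ⟨PathTo.nil⟩

variable {K : Type*} [Field K]

theorem Sop_single {e : E} {p : PathTo s r v} (h : r e = psrc s v p.1) (k : K) :
    Sop s r v K e (Finsupp.single p k) = Finsupp.single ⟨e :: p.1, p.2.cons h⟩ k := by
  rw [Sop, Finsupp.lsum_single, dif_pos h, Finsupp.lsingle_apply]

theorem Stop_single (e : E) (p : PathTo s r v) (k : K) (q : PathTo s r v) :
    Stop s r v K e (Finsupp.single p k) q =
      if h : r e = psrc s v q.1 then Finsupp.single p k ⟨e :: q.1, q.2.cons h⟩ else 0 := by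
  rw [Stop, Finsupp.lsum_single]
  by_cases hp : ∃ q' : PathTo s r v, p.1 = e :: q'.1
  · obtain ⟨q', hq'⟩ := id hp
    have hchoose : hp.choose = q' :=
      Subtype.ext (List.cons_injective (hp.choose_spec.symm.trans hq'))
    obtain ⟨lp, hlp⟩ := p
    subst hq'
    rw [dif_pos hp, hchoose, Finsupp.lsingle_apply]
    split_ifs with hq
    · simp only [Finsupp.single_apply, Subtype.ext_iff, List.cons.injEq, true_and]
    · have : q' ≠ q := by rintro rfl; exact hq hlp.range_head
      simp [this]
  · rw [dif_neg hp, LinearMap.zero_apply, Finsupp.zero_apply]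
    split_ifs with hq
    · rw [Finsupp.single_eq_of_ne]
      rintro rfl
      exact hp ⟨q, rfl⟩
    · rfl

theorem Stop_apply (e : E) (x : PathTo s r v →₀ K) (q : PathTo s r v) :
    Stop s r v K e x q =
      if h : r e = psrc s v q.1 then x ⟨e :: q.1, q.2.cons h⟩ else 0 := by
  induction x using Finsupp.induction_linear with
  | zero => simp
  | add x y hx hy => rw [map_add, Finsupp.add_apply, hx, hy]; split_ifs <;> simp
  | single p k => exact Stop_single e p k q

variable {U : Submodule K (PathTo s r v →₀ K)}

theorem single_nil_mem_of_length_le (hStop : ∀ e : E, ∀ x ∈ U, Stop s r v K e x ∈ U) :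
    ∀ (l : List E) (hl : IsPathTo s r v l) (x : PathTo s r v →₀ K), x ∈ U →
      (∀ q ∈ x.support, q.1.length ≤ l.length) →
      Finsupp.single PathTo.nil (x ⟨l, hl⟩) ∈ U
  | [], hl, x, hx, hlen => by
    have hsupp : x.support ⊆ {PathTo.nil} := fun q hq => Finset.mem_singleton.2 <|
      Subtype.ext (List.eq_nil_of_length_eq_zero (by simpa using hlen q hq))
    change Finsupp.single PathTo.nil (x PathTo.nil) ∈ U
    rwa [← Finsupp.support_subset_singleton.1 hsupp]
  | e :: t, hl, x, hx, hlen => by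
    have hlen' : ∀ q ∈ (Stop s r v K e x).support, q.1.length ≤ t.length := by
      intro q hq
      rw [Finsupp.mem_support_iff, Stop_apply] at hq
      split_ifs at hq with hcomp
      · simpa using hlen _ (Finsupp.mem_support_iff.2 hq)
      · exact (hq rfl).elim
    have := single_nil_mem_of_length_le hStop t hl.tail _ (hStop e x hx) hlen'
    rwa [Stop_apply, dif_pos hl.range_head] at this

theorem single_nil_one_mem_of_ne_bot (hStop : ∀ e : E, ∀ x ∈ U, Stop s r v K e x ∈ U)
    (hU : U ≠ ⊥) :
    Finsupp.single PathTo.nil (1 : K) ∈ U := by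
  obtain ⟨x, hxU, hx0⟩ := (Submodule.ne_bot_iff U).1 hU
  obtain ⟨p, hp, hmax⟩ :=
    x.support.exists_max_image (fun q => q.1.length) (Finsupp.support_nonempty_iff.2 hx0)
  have hxp : x p ≠ 0 := Finsupp.mem_support_iff.1 hp
  simpa [hxp] using U.smul_mem (x p)⁻¹ (single_nil_mem_of_length_le hStop p.1 p.2 x hxU hmax)

theorem single_mem_of_single_nil_mem (hSop : ∀ e : E, ∀ x ∈ U, Sop s r v K e x ∈ U)
    (hnil : Finsupp.single PathTo.nil (1 : K) ∈ U) :
    ∀ (l : List E) (hl : IsPathTo s r v l) (k : K), Finsupp.single ⟨l, hl⟩ k ∈ U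
  | [], _, k => by
    change Finsupp.single PathTo.nil k ∈ U
    simpa using U.smul_mem k hnil
  | e :: t, hl, k => by
    simpa [Sop_single (p := ⟨t, hl.tail⟩) hl.range_head] using
      hSop e _ (single_mem_of_single_nil_mem hSop hnil t hl.tail k)

theorem eq_top_of_single_nil_mem (hSop : ∀ e : E, ∀ x ∈ U, Sop s r v K e x ∈ U)
    (hnil : Finsupp.single PathTo.nil (1 : K) ∈ U) : U = ⊤ := by
  refine Submodule.eq_top_iff'.2 fun x => ?_
  rw [← x.sum_single]
  exact Submodule.finsuppSum_mem _ _ _ _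
    fun p _ => single_mem_of_single_nil_mem hSop hnil p.1 p.2 _

end PathSpace

theorem path_space_module_is_simple :
    (⊥ : Submodule K (PathTo s r v →₀ K)) ≠ ⊤ ∧
    ∀ U : Submodule K (PathTo s r v →₀ K),
      (∀ u : V, ∀ x ∈ U, Pop s r v K u x ∈ U) →
      (∀ e : E, ∀ x ∈ U, Sop s r v K e x ∈ U) →
      (∀ e : E, ∀ x ∈ U, Stop s r v K e x ∈ U) →
      U = ⊥ ∨ U = ⊤ := by
  refine ⟨bot_ne_top, fun U _ hSop hStop => or_iff_not_imp_left.2 fun hU => ?_⟩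
  exact eq_top_of_single_nil_mem hSop (single_nil_one_mem_of_ne_bot hStop hU)
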